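/- arXiv:2412.04928 — 3 statements merged into one kernel-verified Lean document; each statement's English description precedes it below -/
import Mathlib

section
/- If f is a Hahn series solution of the inhomogeneous Mahler equation L(f) = a_{-∞}, then val f belongs to {π(val a_{-∞})} ∪ −S(L). -/
open Polynomial Finset

noncomputable def PL {K : Type*} [Field K] (ℓ n : ℕ) (a : ℕ → Polynomial K) : Finset (ℚ × ℚ) :=
  (Finset.range (n + 1)).biUnion fun i =>
    (a i).support.image fun j : ℕ => ((ℓ : ℚ) ^ i, (j : ℚ))

noncomputable def PsiSet {K : Type*} [Field K] (ℓ n : ℕ) (a : ℕ → Polynomial K) (v : ℚ) :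
    Finset ℚ :=
  (PL ℓ n a).image fun p => v * p.1 + p.2

noncomputable def psi {K : Type*} [Field K] (ℓ n : ℕ) (a : ℕ → Polynomial K) (v : ℚ) : ℚ :=
  ((PsiSet ℓ n a v).min).untopD 0

noncomputable def piF {K : Type*} [Field K] (ℓ n : ℕ) (a : ℕ → Polynomial K) (q : ℚ) : ℚ :=
  (((PL ℓ n a).image fun p => (q - p.2) / p.1).max).unbotD 0

def slopeSet {K : Type*} [Field K] (ℓ n : ℕ) (a : ℕ → Polynomial K) : Set ℚ :=
  {μ | ∃ b : ℚ,
    (∃ p ∈ PL ℓ n a, ∃ q ∈ PL ℓ n a, p ≠ q ∧ p.2 - μ * p.1 = b ∧ q.2 - μ * q.1 = b) ∧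
    ∀ p ∈ PL ℓ n a, b ≤ p.2 - μ * p.1}

noncomputable def scaleEmb (ℓ : ℕ) (hℓ : 2 ≤ ℓ) (i : ℕ) : ℚ ↪o ℚ :=
  (OrderIso.mulLeft₀ ((ℓ : ℚ) ^ i)
    (pow_pos (by exact_mod_cast Nat.lt_of_lt_of_le Nat.zero_lt_two hℓ) i)).toOrderEmbedding

noncomputable def mahlerOp {K : Type*} [Field K] (ℓ : ℕ) (hℓ : 2 ≤ ℓ) (n : ℕ)
    (a : ℕ → Polynomial K) (f : HahnSeries ℚ K) : HahnSeries ℚ K :=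
  ∑ i ∈ Finset.range (n + 1),
    (HahnSeries.ofPowerSeries ℚ K (a i : PowerSeries K)) *
      HahnSeries.embDomain (scaleEmb ℓ hℓ i) f

/-!
Write `v = val f`. The monomial `c z^j f(z^{ℓ^i})` of `L(f)` coming from the point `(ℓ^i, j)` of
`P(L)` has valuation `ℓ^i v + j`. If this linear form attains its minimum `m` over `P(L)` at a
single point, that monomial dominates all others, so `val a_{-∞} = m`, and `π(m) = v` since
`(m - j) / ℓ^i ≤ v` on `P(L)` with equality at the minimiser. Otherwise two points of `P(L)` lie
on the supporting line `j + v ℓ^i = m`, whose slope `-v` is then a slope of the Newton polygon.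
-/

namespace HahnSeries

variable {Γ R ι : Type*} [LinearOrder Γ] [AddCommMonoid R] {s : Finset ι} {F : ι → HahnSeries Γ R}

theorem lt_orderTop_sum {g : WithTop Γ} (hg : g < ⊤) (hF : ∀ i ∈ s, g < (F i).orderTop) :
    g < (∑ i ∈ s, F i).orderTop :=
  Finset.sum_induction F (fun x => g < x.orderTop)
    (fun _ _ hx hy => (lt_min hx hy).trans_le min_orderTop_le_orderTop_add) (by simpa using hg) hF

theorem orderTop_sum_eq_of_lt [DecidableEq ι] {j : ι} (hj : j ∈ s)
    (hF : ∀ i ∈ s \ {j}, (F j).orderTop < (F i).orderTop) :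
    (∑ i ∈ s, F i).orderTop = (F j).orderTop := by
  rw [Finset.sum_eq_add_sum_sdiff_singleton_of_mem hj]
  obtain hs | ⟨i, hi⟩ := (s \ {j}).eq_empty_or_nonempty
  · simp [hs]
  exact orderTop_add_eq_left (lt_orderTop_sum ((hF i hi).trans_le le_top) hF)

end HahnSeries

theorem HahnSeries.ofPowerSeries_coe_polynomial {Γ R : Type*} [Semiring Γ] [PartialOrder Γ]
    [IsStrictOrderedRing Γ] [Semiring R] (p : R[X]) :
    ofPowerSeries Γ R (p : PowerSeries R) = ∑ j ∈ p.support, single (j : Γ) (p.coeff j) := by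
  conv_lhs => rw [p.as_sum_support_C_mul_X_pow]
  simp only [← Polynomial.coeToPowerSeries.ringHom_apply, map_sum, map_mul, map_pow]
  simp [HahnSeries.C_apply, single_mul_single]

section Mahler

variable {K : Type*} [Field K] {ℓ n : ℕ} {a : ℕ → K[X]}

@[simp]
theorem scaleEmb_apply (hℓ : 2 ≤ ℓ) (i : ℕ) (x : ℚ) : scaleEmb ℓ hℓ i x = (ℓ : ℚ) ^ i * x :=
  rfl

def mahlerSupport (n : ℕ) (a : ℕ → K[X]) : Finset (Σ _ : ℕ, ℕ) :=
  (range (n + 1)).sigma fun i => (a i).support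

def newtonPoint (ℓ : ℕ) (x : Σ _ : ℕ, ℕ) : ℚ × ℚ :=
  ((ℓ : ℚ) ^ x.1, (x.2 : ℚ))

theorem PL_eq_image : PL ℓ n a = (mahlerSupport n a).image (newtonPoint ℓ) := by
  ext p
  simp only [PL, mahlerSupport, newtonPoint, Finset.mem_biUnion, Finset.mem_image,
    Finset.mem_sigma, Sigma.exists]
  aesop

theorem newtonPoint_injective (hℓ : 2 ≤ ℓ) : Function.Injective (newtonPoint ℓ) := by
  rintro ⟨i, j⟩ ⟨i', j'⟩ h
  simp only [newtonPoint, Prod.mk.injEq, Nat.cast_inj] at h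
  obtain rfl : i = i' := Nat.pow_right_injective hℓ (by exact_mod_cast h.1)
  rw [h.2]

theorem PL_nonempty {i : ℕ} (hi : i ≤ n) (ha : a i ≠ 0) : (PL ℓ n a).Nonempty := by
  obtain ⟨j, hj⟩ := Polynomial.support_nonempty.2 ha
  rw [PL_eq_image, Finset.image_nonempty]
  exact ⟨⟨i, j⟩, Finset.mem_sigma.2 ⟨Finset.mem_range.2 (Nat.lt_succ_of_le hi), hj⟩⟩

theorem fst_pos_of_mem_PL (hℓ : 0 < ℓ) {p : ℚ × ℚ} (hp : p ∈ PL ℓ n a) : 0 < p.1 := by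
  rw [PL_eq_image] at hp
  obtain ⟨x, -, rfl⟩ := Finset.mem_image.1 hp
  exact pow_pos (Nat.cast_pos.2 hℓ) _

theorem mahlerOp_eq_sum (hℓ : 2 ≤ ℓ) (f : HahnSeries ℚ K) :
    mahlerOp ℓ hℓ n a f = ∑ x ∈ mahlerSupport n a,
      HahnSeries.single (x.2 : ℚ) ((a x.1).coeff x.2) *
        HahnSeries.embDomain (scaleEmb ℓ hℓ x.1) f := by
  simp only [mahlerOp, mahlerSupport, Finset.sum_sigma, HahnSeries.ofPowerSeries_coe_polynomial,
    Finset.sum_mul]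

theorem orderTop_mahlerOp_of_unique_min (hℓ : 2 ≤ ℓ) {f : HahnSeries ℚ K} {v : ℚ}
    (hv : f.orderTop = v) {p₀ : ℚ × ℚ} (hp₀ : p₀ ∈ PL ℓ n a)
    (hlt : ∀ p ∈ PL ℓ n a, p ≠ p₀ → v * p₀.1 + p₀.2 < v * p.1 + p.2) :
    (mahlerOp ℓ hℓ n a f).orderTop = (v * p₀.1 + p₀.2 : ℚ) := by
  rw [PL_eq_image] at hp₀ hlt
  obtain ⟨x₀, hx₀, rfl⟩ := Finset.mem_image.1 hp₀
  have hterm : ∀ x ∈ mahlerSupport n a,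
      (HahnSeries.single (x.2 : ℚ) ((a x.1).coeff x.2) *
        HahnSeries.embDomain (scaleEmb ℓ hℓ x.1) f).orderTop =
        (v * (newtonPoint ℓ x).1 + (newtonPoint ℓ x).2 : ℚ) := by
    intro x hx
    have hc : (a x.1).coeff x.2 ≠ 0 := Polynomial.mem_support_iff.1 (Finset.mem_sigma.1 hx).2
    rw [HahnSeries.orderTop_mul, HahnSeries.orderTop_single hc, HahnSeries.orderTop_embDomain, hv,
      WithTop.map_coe, ← WithTop.coe_add, WithTop.coe_eq_coe, scaleEmb_apply, newtonPoint]
    ring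
  rw [mahlerOp_eq_sum, HahnSeries.orderTop_sum_eq_of_lt hx₀, hterm x₀ hx₀]
  intro x hx
  rw [Finset.mem_sdiff, Finset.mem_singleton] at hx
  rw [hterm x₀ hx₀, hterm x hx.1, WithTop.coe_lt_coe]
  exact hlt _ (Finset.mem_image_of_mem _ hx.1) ((newtonPoint_injective hℓ).ne hx.2)

end Mahler

section NewtonPolygon

variable {K : Type*} [Field K] {ℓ n : ℕ} {a : ℕ → K[X]} {v : ℚ} {p₀ : ℚ × ℚ}

theorem piF_eq_of_isMinOn (hℓ : 0 < ℓ) (hp₀ : p₀ ∈ PL ℓ n a)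
    (hmin : IsMinOn (fun p : ℚ × ℚ => v * p.1 + p.2) (PL ℓ n a) p₀) :
    piF ℓ n a (v * p₀.1 + p₀.2) = v := by
  have hmax : ((PL ℓ n a).image fun p => (v * p₀.1 + p₀.2 - p.2) / p.1).max = v := by
    refine le_antisymm (Finset.max_le fun _ hq => ?_)
      (Finset.le_max (Finset.mem_image.2 ⟨p₀, hp₀, ?_⟩))
    · obtain ⟨p, hp, rfl⟩ := Finset.mem_image.1 hq
      rw [WithBot.coe_le_coe, div_le_iff₀ (fst_pos_of_mem_PL hℓ hp)]
      linarith [isMinOn_iff.1 hmin p hp]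
    · field_simp [(fst_pos_of_mem_PL hℓ hp₀).ne']
      ring
  rw [piF, hmax, WithBot.unbotD_coe]

theorem neg_mem_slopeSet (hp₀ : p₀ ∈ PL ℓ n a)
    (hmin : IsMinOn (fun p : ℚ × ℚ => v * p.1 + p.2) (PL ℓ n a) p₀) {p : ℚ × ℚ}
    (hp : p ∈ PL ℓ n a) (hne : p ≠ p₀) (htie : v * p.1 + p.2 = v * p₀.1 + p₀.2) :
    -v ∈ slopeSet ℓ n a :=
  ⟨v * p₀.1 + p₀.2, ⟨p, hp, p₀, hp₀, hne, by linarith, by ring⟩,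
    fun q hq => by linarith [isMinOn_iff.1 hmin q hq]⟩

end NewtonPolygon

theorem stmt4_general {K : Type*} [Field K] (ℓ n : ℕ) (hℓ : 2 ≤ ℓ) (a : ℕ → Polynomial K)
    (h0 : a 0 ≠ 0) (ainf f : HahnSeries ℚ K)
    (hf : mahlerOp ℓ hℓ n a f = ainf) :
    f.orderTop = WithTop.map (piF ℓ n a) ainf.orderTop ∨
      ∃ μ ∈ slopeSet ℓ n a, f.orderTop = ((-μ : ℚ) : WithTop ℚ) := by
  obtain rfl | hf0 := eq_or_ne f 0
  · left
    simp [← hf, mahlerOp]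
  obtain ⟨v, hv⟩ := WithTop.ne_top_iff_exists.1 (HahnSeries.orderTop_ne_top.2 hf0)
  obtain ⟨p₀, hp₀, hmin⟩ := (PL ℓ n a).exists_min_image (fun p => v * p.1 + p.2)
    (PL_nonempty (Nat.zero_le n) h0)
  replace hmin : IsMinOn (fun p : ℚ × ℚ => v * p.1 + p.2) (PL ℓ n a) p₀ := isMinOn_iff.2 hmin
  by_cases htie : ∃ p ∈ PL ℓ n a, p ≠ p₀ ∧ v * p.1 + p.2 = v * p₀.1 + p₀.2
  · obtain ⟨p, hp, hne, heq⟩ := htie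
    exact Or.inr ⟨-v, neg_mem_slopeSet hp₀ hmin hp hne heq, by rw [← hv, neg_neg]⟩
  push Not at htie
  have hlt : ∀ p ∈ PL ℓ n a, p ≠ p₀ → v * p₀.1 + p₀.2 < v * p.1 + p.2 := fun p hp hne =>
    (isMinOn_iff.1 hmin p hp).lt_of_ne' (htie p hp hne)
  left
  rw [← hf, orderTop_mahlerOp_of_unique_min hℓ hv.symm hp₀ hlt, ← hv, WithTop.map_coe,
    piF_eq_of_isMinOn (by omega) hp₀ hmin]

theorem stmt4 {K : Type*} [Field K] (ℓ n : ℕ) (hℓ : 2 ≤ ℓ) (a : ℕ → Polynomial K)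
    (h0 : a 0 ≠ 0) (hn : a n ≠ 0) (ainf f : HahnSeries ℚ K)
    (hf : mahlerOp ℓ hℓ n a f = ainf) :
    f.orderTop = WithTop.map (piF ℓ n a) ainf.orderTop ∨
      ∃ μ ∈ slopeSet ℓ n a, f.orderTop = ((-μ : ℚ) : WithTop ℚ) :=
  stmt4_general ℓ n hℓ a h0 ainf f hf
end

section
/- The receptacle V is contained in Z_{d,ℓ} = ∪_{i≥0} (1/(d ℓ^i)) ℤ, where d is a common multiple of the denominators of the slopes of L. Moreover, for any v ∈ Z_{d,ℓ} and any w ∈ π(Ψ(v)), one has w ∈ Z_{d,ℓ} and h(v) ≤ h(w) + n, where h(x) = min { i ≥ 0 : x ∈ (1/(dℓ^i)) ℤ }. -/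
open Polynomial Finset

noncomputable def VSeq {K : Type*} [Field K] (ℓ n : ℕ) (a : ℕ → Polynomial K) : ℕ → Set ℚ
  | 0 => Neg.neg '' slopeSet ℓ n a
  | i + 1 => ⋃ v ∈ VSeq ℓ n a i, ((PsiSet ℓ n a v).image (piF ℓ n a) : Set ℚ)

noncomputable def VSet {K : Type*} [Field K] (ℓ n : ℕ) (a : ℕ → Polynomial K) : Set ℚ :=
  ⋃ i, VSeq ℓ n a i

def Zdl (d ℓ : ℕ) : Set ℚ := {x | ∃ i : ℕ, ∃ m : ℤ, x = (m : ℚ) / (d * ℓ ^ i)}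

noncomputable def hfun (d ℓ : ℕ) (x : ℚ) : ℕ :=
  sInf {i : ℕ | ∃ m : ℤ, x = (m : ℚ) / (d * ℓ ^ i)}

/-!
Every `w ∈ π(Ψ(v))` satisfies an affine relation `w ℓ^i' + j' = v ℓ^i + j` with `i, i' ≤ n` and
integers `j, j'`: the values of `Ψ(v)` are of the form `v ℓ^i + j`, and the maximum defining `π` is
attained at a point `(ℓ^i', j')` of `P(L)`. Clearing denominators in this relation, in either
direction, shows that membership in `Z_{d,ℓ}` is preserved and that the height changes by at most
`n`. The receptacle starts from the negated slopes, which lie in `(1/d) ℤ` by the choice of `d`.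
-/

section PointSet

variable {K : Type*} [Field K] {ℓ n : ℕ} {a : ℕ → Polynomial K}

lemma exists_eq_of_mem_PL {p : ℚ × ℚ} (hp : p ∈ PL ℓ n a) :
    ∃ i ≤ n, ∃ j : ℕ, p = ((ℓ : ℚ) ^ i, (j : ℚ)) := by
  obtain ⟨i, hi, hp⟩ := Finset.mem_biUnion.mp hp
  obtain ⟨j, -, rfl⟩ := Finset.mem_image.mp hp
  exact ⟨i, Nat.lt_succ_iff.mp (Finset.mem_range.mp hi), j, rfl⟩

lemma exists_mem_PL_piF_eq (hPL : (PL ℓ n a).Nonempty) (q : ℚ) :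
    ∃ p ∈ PL ℓ n a, piF ℓ n a q = (q - p.2) / p.1 := by
  set s := (PL ℓ n a).image fun p => (q - p.2) / p.1 with hs
  have hsne : s.Nonempty := hPL.image _
  obtain ⟨p, hp, hval⟩ := Finset.mem_image.mp (s.max'_mem hsne)
  refine ⟨p, hp, ?_⟩
  rw [piF, ← hs, ← Finset.coe_max' hsne, WithBot.unbotD_coe, hval]

lemma exists_affine_relation_of_mem_piF_image (hℓ : ℓ ≠ 0) {v w : ℚ}
    (hw : w ∈ (PsiSet ℓ n a v).image (piF ℓ n a)) :
    ∃ i ≤ n, ∃ i' ≤ n, ∃ j j' : ℕ,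
      w * (ℓ : ℚ) ^ i' + (j' : ℚ) = v * (ℓ : ℚ) ^ i + (j : ℚ) := by
  obtain ⟨q, hq, rfl⟩ := Finset.mem_image.mp hw
  obtain ⟨p, hp, rfl⟩ := Finset.mem_image.mp hq
  obtain ⟨i, hi, j, rfl⟩ := exists_eq_of_mem_PL hp
  obtain ⟨p', hp', hmax⟩ := exists_mem_PL_piF_eq ⟨_, hp⟩ (v * (ℓ : ℚ) ^ i + j)
  obtain ⟨i', hi', j', rfl⟩ := exists_eq_of_mem_PL hp'
  refine ⟨i, hi, i', hi', j, j', ?_⟩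
  have : (ℓ : ℚ) ^ i' ≠ 0 := pow_ne_zero _ (Nat.cast_ne_zero.mpr hℓ)
  rw [hmax]
  field_simp
  ring

end PointSet

section Height

variable {d ℓ : ℕ}

lemma hfun_le {x : ℚ} {k : ℕ} {m : ℤ} (hx : x = m / (d * ℓ ^ k)) : hfun d ℓ x ≤ k :=
  Nat.sInf_le ⟨m, hx⟩

lemma exists_eq_div_hfun {x : ℚ} (hx : x ∈ Zdl d ℓ) :
    ∃ m : ℤ, x = m / (d * ℓ ^ hfun d ℓ x) :=
  Nat.sInf_mem hx

lemma neg_mem_Zdl_of_mul_eq_int (hd : d ≠ 0) {μ : ℚ} {m : ℤ} (hμ : (d : ℚ) * μ = m) :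
    -μ ∈ Zdl d ℓ :=
  ⟨0, -m, by push_cast; field_simp; linarith⟩

lemma exists_eq_div_of_affine_relation (hd : d ≠ 0) (hℓ : ℓ ≠ 0) {x y : ℚ} {i i' k : ℕ}
    {j j' : ℤ} {m : ℤ} (hx : x = m / (d * ℓ ^ k))
    (hrel : y * (ℓ : ℚ) ^ i' + j' = x * (ℓ : ℚ) ^ i + j) :
    y = ((m * ℓ ^ i + (j - j') * d * ℓ ^ k : ℤ) : ℚ) / (d * ℓ ^ (k + i')) := by
  have hm : x * ((d : ℚ) * ℓ ^ k) = m := by rw [hx]; field_simp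
  rw [eq_div_iff (by positivity)]
  push_cast
  rw [pow_add]
  linear_combination ((d : ℚ) * (ℓ : ℚ) ^ k) * hrel + (ℓ : ℚ) ^ i * hm

lemma mem_Zdl_and_hfun_le_of_affine_relation (hd : d ≠ 0) (hℓ : ℓ ≠ 0) {v w : ℚ}
    {i i' : ℕ} {j j' : ℤ} (hrel : w * (ℓ : ℚ) ^ i' + j' = v * (ℓ : ℚ) ^ i + j)
    (hv : v ∈ Zdl d ℓ) : w ∈ Zdl d ℓ ∧ hfun d ℓ v ≤ hfun d ℓ w + i := by
  obtain ⟨m, hm⟩ := exists_eq_div_hfun hv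
  have hw : w ∈ Zdl d ℓ := ⟨_, _, exists_eq_div_of_affine_relation hd hℓ hm hrel⟩
  obtain ⟨m', hm'⟩ := exists_eq_div_hfun hw
  exact ⟨hw, hfun_le (exists_eq_div_of_affine_relation hd hℓ hm' hrel.symm)⟩

end Height

section Receptacle

variable {K : Type*} [Field K] {d ℓ n : ℕ} {a : ℕ → Polynomial K}

lemma mem_Zdl_and_hfun_le_of_mem_piF_image (hd : d ≠ 0) (hℓ : ℓ ≠ 0) {v w : ℚ}
    (hv : v ∈ Zdl d ℓ) (hw : w ∈ (PsiSet ℓ n a v).image (piF ℓ n a)) :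
    w ∈ Zdl d ℓ ∧ hfun d ℓ v ≤ hfun d ℓ w + n := by
  obtain ⟨i, hi, i', -, j, j', hrel⟩ := exists_affine_relation_of_mem_piF_image hℓ hw
  obtain ⟨hwZ, hle⟩ := mem_Zdl_and_hfun_le_of_affine_relation (j := (j : ℤ)) (j' := (j' : ℤ))
    hd hℓ (by exact_mod_cast hrel) hv
  exact ⟨hwZ, by omega⟩

lemma VSeq_subset_Zdl (hd : d ≠ 0) (hℓ : ℓ ≠ 0)
    (hdsl : ∀ μ ∈ slopeSet ℓ n a, ∃ m : ℤ, (d : ℚ) * μ = m) (N : ℕ) :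
    VSeq ℓ n a N ⊆ Zdl d ℓ := by
  induction N with
  | zero =>
    rintro _ ⟨μ, hμ, rfl⟩
    obtain ⟨m, hm⟩ := hdsl μ hμ
    exact neg_mem_Zdl_of_mul_eq_int hd hm
  | succ N ih =>
    intro w hw
    simp only [VSeq, Set.mem_iUnion] at hw
    obtain ⟨v, hv, hw⟩ := hw
    exact (mem_Zdl_and_hfun_le_of_mem_piF_image hd hℓ (ih hv) hw).1

end Receptacle

theorem stmt13_general {K : Type*} [Field K] (ℓ n : ℕ) (hℓ : 2 ≤ ℓ) (a : ℕ → Polynomial K)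
    (d : ℕ) (hd : 1 ≤ d)
    (hdsl : ∀ μ ∈ slopeSet ℓ n a, ∃ m : ℤ, (d : ℚ) * μ = m) :
    VSet ℓ n a ⊆ Zdl d ℓ ∧
    ∀ v ∈ Zdl d ℓ, ∀ w ∈ (PsiSet ℓ n a v).image (piF ℓ n a),
      w ∈ Zdl d ℓ ∧ hfun d ℓ v ≤ hfun d ℓ w + n := by
  have hd0 : d ≠ 0 := by omega
  have hℓ0 : ℓ ≠ 0 := by omega
  exact ⟨Set.iUnion_subset (VSeq_subset_Zdl hd0 hℓ0 hdsl),
    fun v hv w hw => mem_Zdl_and_hfun_le_of_mem_piF_image hd0 hℓ0 hv hw⟩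

theorem stmt13 {K : Type*} [Field K] (ℓ n : ℕ) (hℓ : 2 ≤ ℓ) (a : ℕ → Polynomial K)
    (h0 : a 0 ≠ 0) (hn : a n ≠ 0) (d : ℕ) (hd : 1 ≤ d)
    (hdsl : ∀ μ ∈ slopeSet ℓ n a, ∃ m : ℤ, (d : ℚ) * μ = m) :
    VSet ℓ n a ⊆ Zdl d ℓ ∧
    ∀ v ∈ Zdl d ℓ, ∀ w ∈ (PsiSet ℓ n a v).image (piF ℓ n a),
      w ∈ Zdl d ℓ ∧ hfun d ℓ v ≤ hfun d ℓ w + n :=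
  stmt13_general ℓ n hℓ a d hd hdsl
end

section
/- Let w, w' ∈ Z_{d,ℓ}. If w' ∈ Δ(w), then w' < w and w ∈ π(Ψ(w')); conversely, if w ∈ π(Ψ(w')) and w ≠ w', then w' ∈ Δ(w) and w' < w. Here Δ(w) = { (ψ(w) − β)/ℓ^α : (ℓ^α, β) ∈ P(L) } \ {w}. -/
/-!
The minimum `ψ` of finitely many affine maps `v ↦ v * s + t` with positive slopes is an increasing
bijection of the line whose inverse is the maximum `π` of the inverse maps `q ↦ (q - t) / s`:
each `(ψ v - t) / s` is at most `v`, with equality for a pair attaining the minimum, and dually.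
With `π ∘ ψ = id` and `ψ ∘ π = id`, both implications reduce to `w' ≤ π (w' * s + t)`.
-/

open Polynomial Finset

noncomputable def DeltaSet {K : Type*} [Field K] (ℓ n : ℕ) (a : ℕ → Polynomial K)
    (w : ℚ) : Finset ℚ :=
  ((PL ℓ n a).image fun p => (psi ℓ n a w - p.2) / p.1) \ {w}

section LowerEnvelope

variable {𝕜 : Type*} [Field 𝕜] [LinearOrder 𝕜]

/-- For `P = PL ℓ n a` this is `psi ℓ n a`, and `lowerEnvelopeInv` is `piF ℓ n a`, by `rfl`. -/
noncomputable def lowerEnvelope (P : Finset (𝕜 × 𝕜)) (v : 𝕜) : 𝕜 :=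
  ((P.image fun p => v * p.1 + p.2).min).untopD 0

noncomputable def lowerEnvelopeInv (P : Finset (𝕜 × 𝕜)) (q : 𝕜) : 𝕜 :=
  ((P.image fun p => (q - p.2) / p.1).max).unbotD 0

variable {P : Finset (𝕜 × 𝕜)} {p : 𝕜 × 𝕜}

theorem lowerEnvelope_le (hp : p ∈ P) (v : 𝕜) : lowerEnvelope P v ≤ v * p.1 + p.2 := by
  have hne : (P.image fun p => v * p.1 + p.2).Nonempty := ⟨_, mem_image_of_mem _ hp⟩
  rw [lowerEnvelope, ← coe_min' hne, WithTop.untopD_coe]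
  exact min'_le _ _ (mem_image_of_mem _ hp)

theorem exists_lowerEnvelope_eq (hP : P.Nonempty) (v : 𝕜) :
    ∃ p ∈ P, lowerEnvelope P v = v * p.1 + p.2 := by
  have hne := hP.image fun p => v * p.1 + p.2
  obtain ⟨p, hp, hpv⟩ := mem_image.mp (min'_mem _ hne)
  exact ⟨p, hp, by rw [lowerEnvelope, ← coe_min' hne, WithTop.untopD_coe, hpv]⟩

theorem le_lowerEnvelopeInv (hp : p ∈ P) (q : 𝕜) : (q - p.2) / p.1 ≤ lowerEnvelopeInv P q := by
  have hne : (P.image fun p => (q - p.2) / p.1).Nonempty := ⟨_, mem_image_of_mem _ hp⟩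
  rw [lowerEnvelopeInv, ← coe_max' hne, WithBot.unbotD_coe]
  exact le_max' _ _ (mem_image_of_mem (fun p : 𝕜 × 𝕜 => (q - p.2) / p.1) hp)

theorem exists_lowerEnvelopeInv_eq (hP : P.Nonempty) (q : 𝕜) :
    ∃ p ∈ P, lowerEnvelopeInv P q = (q - p.2) / p.1 := by
  have hne := hP.image fun p => (q - p.2) / p.1
  obtain ⟨p, hp, hpq⟩ := mem_image.mp (max'_mem _ hne)
  exact ⟨p, hp, by rw [lowerEnvelopeInv, ← coe_max' hne, WithBot.unbotD_coe, hpq]⟩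

theorem le_lowerEnvelopeInv_affine (hp : p ∈ P) (hp₁ : p.1 ≠ 0) (w : 𝕜) :
    w ≤ lowerEnvelopeInv P (w * p.1 + p.2) := by
  simpa [mul_div_cancel_right₀ _ hp₁] using le_lowerEnvelopeInv hp (w * p.1 + p.2)

variable [IsStrictOrderedRing 𝕜] (hpos : ∀ p ∈ P, 0 < p.1)
include hpos

theorem lowerEnvelopeInv_lowerEnvelope (hP : P.Nonempty) (v : 𝕜) :
    lowerEnvelopeInv P (lowerEnvelope P v) = v := by
  obtain ⟨p, hp, hpv⟩ := exists_lowerEnvelopeInv_eq hP (lowerEnvelope P v)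
  obtain ⟨p₀, hp₀, hp₀v⟩ := exists_lowerEnvelope_eq hP v
  apply le_antisymm
  · rw [hpv, div_le_iff₀ (hpos p hp)]
    linarith [lowerEnvelope_le hp v]
  · calc v = (lowerEnvelope P v - p₀.2) / p₀.1 := by
          rw [hp₀v, add_sub_cancel_right, mul_div_cancel_right₀ _ (hpos p₀ hp₀).ne']
      _ ≤ _ := le_lowerEnvelopeInv hp₀ _

theorem lowerEnvelope_lowerEnvelopeInv (hP : P.Nonempty) (q : 𝕜) :
    lowerEnvelope P (lowerEnvelopeInv P q) = q := by
  obtain ⟨p, hp, hpq⟩ := exists_lowerEnvelope_eq hP (lowerEnvelopeInv P q)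
  obtain ⟨p₀, hp₀, hp₀q⟩ := exists_lowerEnvelopeInv_eq hP q
  apply le_antisymm
  · calc lowerEnvelope P (lowerEnvelopeInv P q) ≤ lowerEnvelopeInv P q * p₀.1 + p₀.2 :=
          lowerEnvelope_le hp₀ _
      _ = q := by rw [hp₀q, div_mul_cancel₀ _ (hpos p₀ hp₀).ne', sub_add_cancel]
  · have := le_lowerEnvelopeInv hp q
    rw [div_le_iff₀ (hpos p hp)] at this
    linarith

theorem lt_and_mem_image_lowerEnvelopeInv {w w' : 𝕜}
    (h : w' ∈ P.image fun p => (lowerEnvelope P w - p.2) / p.1) (hne : w' ≠ w) :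
    w' < w ∧ w ∈ (P.image fun p => w' * p.1 + p.2).image (lowerEnvelopeInv P) := by
  obtain ⟨p, hp, rfl⟩ := mem_image.mp h
  have hψ : (lowerEnvelope P w - p.2) / p.1 * p.1 + p.2 = lowerEnvelope P w := by
    rw [div_mul_cancel₀ _ (hpos p hp).ne', sub_add_cancel]
  have hπ : lowerEnvelopeInv P (lowerEnvelope P w) = w :=
    lowerEnvelopeInv_lowerEnvelope hpos ⟨p, hp⟩ w
  have hle := le_lowerEnvelopeInv_affine hp (hpos p hp).ne' ((lowerEnvelope P w - p.2) / p.1)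
  rw [hψ, hπ] at hle
  exact ⟨lt_of_le_of_ne hle hne, mem_image.mpr ⟨_, mem_image_of_mem _ hp, by rw [hψ, hπ]⟩⟩

theorem mem_image_and_lt_of_mem_image_lowerEnvelopeInv {w w' : 𝕜}
    (h : w ∈ (P.image fun p => w' * p.1 + p.2).image (lowerEnvelopeInv P)) (hne : w ≠ w') :
    w' ∈ (P.image fun p => (lowerEnvelope P w - p.2) / p.1) ∧ w' < w := by
  obtain ⟨q, hq, rfl⟩ := mem_image.mp h
  obtain ⟨p, hp, rfl⟩ := mem_image.mp hq
  rw [lowerEnvelope_lowerEnvelopeInv hpos ⟨p, hp⟩]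
  refine ⟨mem_image.mpr ⟨p, hp, by field_simp [(hpos p hp).ne']; ring⟩, ?_⟩
  exact lt_of_le_of_ne (le_lowerEnvelopeInv_affine hp (hpos p hp).ne' w') hne.symm

end LowerEnvelope

theorem PL_fst_pos {K : Type*} [Field K] {ℓ : ℕ} (hℓ : 0 < ℓ) (n : ℕ) (a : ℕ → Polynomial K) :
    ∀ p ∈ PL ℓ n a, (0 : ℚ) < p.1 := by
  intro p hp
  obtain ⟨i, -, hi⟩ := mem_biUnion.mp hp
  obtain ⟨j, -, rfl⟩ := mem_image.mp hi
  exact pow_pos (Nat.cast_pos.mpr hℓ) i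

theorem stmt15_general {K : Type*} [Field K] (ℓ n : ℕ) (hℓ : 2 ≤ ℓ) (a : ℕ → Polynomial K)
    (w w' : ℚ) :
    (w' ∈ DeltaSet ℓ n a w →
      w' < w ∧ w ∈ (PsiSet ℓ n a w').image (piF ℓ n a)) ∧
    (w ∈ (PsiSet ℓ n a w').image (piF ℓ n a) → w ≠ w' →
      w' ∈ DeltaSet ℓ n a w ∧ w' < w) := by
  have hpos := PL_fst_pos (by omega : 0 < ℓ) n a
  refine ⟨fun h => ?_, fun h hne => ?_⟩
  · obtain ⟨hw', hne⟩ := mem_sdiff.mp h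
    exact lt_and_mem_image_lowerEnvelopeInv hpos hw' (notMem_singleton.mp hne)
  · obtain ⟨hw', hlt⟩ := mem_image_and_lt_of_mem_image_lowerEnvelopeInv hpos h hne
    exact ⟨mem_sdiff.mpr ⟨hw', notMem_singleton.mpr hlt.ne⟩, hlt⟩

theorem stmt15 {K : Type*} [Field K] (ℓ n : ℕ) (hℓ : 2 ≤ ℓ) (a : ℕ → Polynomial K)
    (h0 : a 0 ≠ 0) (hn : a n ≠ 0) (d : ℕ) (hd : 1 ≤ d)
    (hdsl : ∀ μ ∈ slopeSet ℓ n a, ∃ m : ℤ, (d : ℚ) * μ = m)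
    (w w' : ℚ) (hw : w ∈ Zdl d ℓ) (hw' : w' ∈ Zdl d ℓ) :
    (w' ∈ DeltaSet ℓ n a w →
      w' < w ∧ w ∈ (PsiSet ℓ n a w').image (piF ℓ n a)) ∧
    (w ∈ (PsiSet ℓ n a w').image (piF ℓ n a) → w ≠ w' →
      w' ∈ DeltaSet ℓ n a w ∧ w' < w) :=
  stmt15_general ℓ n hℓ a w w'
end
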